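/- In the category of groupoids, every isofibration has the right lifting property with respect to every functor that is both an equivalence and injective on objects. -/

import Mathlib

open CategoryTheory

/-- A functor is an isofibration if every isomorphism with source in its image
lifts to an isomorphism with prescribed source. -/
def IsIsofibration {A B : Type*} [Category A] [Category B] (F : A ⥤ B) : Prop :=
  ∀ (a : A) (b : B) (e : F.obj a ≅ b), ∃ (a' : A) (α : a ≅ a') (h : F.obj a' = b),
    F.map α.hom ≫ eqToHom h = e.hom

/-!
An injective-on-objects equivalence `i : A ⥤ B` is a strong deformation retract: choosing
`r b` to be the unique preimage when `b` lies in the image of `i`, and any object of `A`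
isomorphic to `b` otherwise, gives `r : B ⥤ A` with `i ⋙ r = 𝟭 A` and `ε : r ⋙ i ≅ 𝟭 B`
trivial along `i`. Given a square `f ⋙ p = i ⋙ g`, the functor `r ⋙ f` satisfies the upper
triangle, and the lower one up to the isomorphism `g ε`. Since `p` is an isofibration,
`r ⋙ f` can be moved along a lift of `g ε` to a functor lying strictly over `g`; as `g ε` is
trivial along `i`, the lift may be chosen trivial there, which keeps the upper triangle strict.
-/

section

variable {A B E D : Type*} [Category A] [Category B] [Category E] [Category D]

theorem IsIsofibration.exists_lift_trivial_of_eqToHom {p : E ⥤ D} (hp : IsIsofibration p)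
    (a : E) (d : D) (e : p.obj a ≅ d) :
    ∃ (a' : E) (α : a ≅ a') (h : p.obj a' = d), p.map α.hom ≫ eqToHom h = e.hom ∧
      ∀ h₀ : p.obj a = d, e.hom = eqToHom h₀ → ∃ h₁ : a = a', α.hom = eqToHom h₁ := by
  by_cases htriv : ∃ h₀ : p.obj a = d, e.hom = eqToHom h₀
  · obtain ⟨h₀, he⟩ := htriv
    exact ⟨a, Iso.refl a, h₀, by simp [he], fun _ _ => ⟨rfl, rfl⟩⟩
  · obtain ⟨a', α, h, hα⟩ := hp a d e
    exact ⟨a', α, h, hα, fun h₀ he => (htriv ⟨h₀, he⟩).elim⟩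

theorem IsIsofibration.exists_lift_natIso {p : E ⥤ D} (hp : IsIsofibration p) {F : B ⥤ E}
    {G : B ⥤ D} (θ : F ⋙ p ≅ G) :
    ∃ (F' : B ⥤ E) (α : F ≅ F'), F' ⋙ p = G ∧
      ∀ b (h : p.obj (F.obj b) = G.obj b), θ.hom.app b = eqToHom h →
        ∃ h' : F.obj b = F'.obj b, α.hom.app b = eqToHom h' := by
  choose L β hL hlift htriv using fun b => hp.exists_lift_trivial_of_eqToHom _ _ (θ.app b)
  simp only [Iso.app_hom] at hlift htriv
  refine ⟨F.copyObj L β, F.isoCopyObj L β, ?_, fun b h hθ => htriv b h hθ⟩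
  refine Functor.ext_of_iso ((Functor.isoWhiskerRight (F.isoCopyObj L β) p).symm ≪≫ θ)
    (fun b => (hL b : (F.copyObj L β ⋙ p).obj b = G.obj b)) fun b => ?_
  simp only [Iso.trans_hom, Iso.symm_hom, NatTrans.comp_app, Functor.isoWhiskerRight_inv,
    Functor.whiskerRight_app, Functor.isoCopyObj_inv_app, ← hlift b]
  exact (β b).map_inv_hom_id_assoc p _

theorem CategoryTheory.Functor.exists_retraction_of_injective_obj (i : A ⥤ B) [i.Full]
    [i.Faithful] [i.EssSurj] (hinj : Function.Injective i.obj) :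
    ∃ (r : B ⥤ A) (ε : r ⋙ i ≅ 𝟭 B), i ⋙ r = 𝟭 A ∧
      ∀ a, ∃ h, ε.hom.app (i.obj a) = eqToHom h := by
  have hchoice : ∀ b : B, ∃ (a : A) (ε : i.obj a ≅ b),
      b ∈ Set.range i.obj → ∃ h, ε.hom = eqToHom h := by
    intro b
    by_cases hb : b ∈ Set.range i.obj
    · obtain ⟨a, rfl⟩ := hb
      exact ⟨a, Iso.refl _, fun _ => ⟨rfl, rfl⟩⟩
    · exact ⟨i.objPreimage b, i.objObjPreimageIso b, fun h => (hb h).elim⟩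
  choose R ε hε using hchoice
  let r : B ⥤ A :=
    { obj := R
      map := fun φ => i.preimage ((ε _).hom ≫ φ ≫ (ε _).inv)
      map_id := fun b => i.map_injective (by simp)
      map_comp := fun φ ψ => i.map_injective (by simp) }
  refine ⟨r, NatIso.ofComponents ε fun φ => by simp [r], ?_, fun a => hε _ ⟨a, rfl⟩⟩
  have hR : ∀ a, R (i.obj a) = a := fun a => hinj (hε _ ⟨a, rfl⟩).1
  refine Functor.ext hR fun a a' ψ => i.map_injective ?_
  obtain ⟨h, hεa⟩ := hε _ ⟨a, rfl⟩
  obtain ⟨h', hεa'⟩ := hε _ ⟨a', rfl⟩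
  simp [r, Iso.ext hεa (β := eqToIso h), Iso.ext hεa' (β := eqToIso h'), eqToHom_map]

theorem IsIsofibration.exists_lift_of_injective_obj {p : E ⥤ D} (hp : IsIsofibration p)
    (i : A ⥤ B) [i.Full] [i.Faithful] [i.EssSurj] (hinj : Function.Injective i.obj)
    {f : A ⥤ E} {g : B ⥤ D} (w : f ⋙ p = i ⋙ g) :
    ∃ l : B ⥤ E, i ⋙ l = f ∧ l ⋙ p = g := by
  obtain ⟨r, ε, hri, hε⟩ := i.exists_retraction_of_injective_obj hinj
  have hf : i ⋙ r ⋙ f = f := by rw [← Functor.assoc, hri, Functor.id_comp]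
  let θ : (r ⋙ f) ⋙ p ≅ g :=
    eqToIso (by rw [Functor.assoc, w, Functor.assoc]) ≪≫ Functor.isoWhiskerRight ε g ≪≫
      g.leftUnitor
  obtain ⟨l, α, hlp, hα⟩ := hp.exists_lift_natIso θ
  refine ⟨l, ?_, hlp⟩
  have hα_trivial : ∀ a, ∃ h, α.hom.app (i.obj a) = eqToHom h := fun a => by
    obtain ⟨h, hεa⟩ := hε a
    exact hα (i.obj a) ((Functor.congr_obj w _).trans (congrArg g.obj h))
      (by simp [θ, hεa, eqToHom_map])
  choose hobj hαi using hα_trivial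
  refine Functor.ext_of_iso ((Functor.isoWhiskerLeft i α).symm ≪≫ eqToIso hf)
    (fun a => (hobj a).symm.trans (Functor.congr_obj hf a)) fun a => ?_
  simp [← Iso.app_inv, Iso.ext (α := α.app (i.obj a)) (β := eqToIso (hobj a)) (hαi a)]

end

/-- In the category of groupoids, every isofibration has the right lifting
property with respect to every injective-on-objects equivalence. -/
theorem isofibration_rlp_injective_equivalence
    {E D : Grpd} (p : E ⟶ D) (hfib : IsIsofibration p) :
    ∀ {A B : Grpd} (i : A ⟶ B), Function.Injective i.obj → i.IsEquivalence →
      HasLiftingProperty i p := by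
  intro A B i hinj _
  refine ⟨fun {f g} sq => ?_⟩
  obtain ⟨l, hil, hlp⟩ := hfib.exists_lift_of_injective_obj i hinj sq.w
  exact ⟨⟨⟨l, hil, hlp⟩⟩⟩
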